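/- Let h ∈ L¹(ℂ²;ℂ) and let K_h be the associated two-particle Töplitz kernel. Then for all x₁,x₂,y₁,y₂ ∈ ℝ, K_h(x₂,x₁;y₁,y₂) = (2πℏ)^{−2} ∫_{ℂ²} h(z₁,z₂) exp(−|z₁−z₂|²/(2ℏ)) Φ_{z₂, conj(z₁)}(x₁,y₁) Φ_{z₁, conj(z₂)}(x₂,y₂) dz₁ dz₂. That is, the kernel of V_{1↔2} applied to a Töplitz operator is given by the Gaussian weight e^{−|z₁−z₂|²/2ℏ} times the analytically continued coherent projectors in which the antiholomorphic variables conj(z₁), conj(z₂) are paired with the exchanged holomorphic variables z₂, z₁. (Töplitz exchange lemma, V-version.) -/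
import Mathlib


open MeasureTheory Complex

/-- One-dimensional coherent state `ψ_z`, `z = q + ip`. -/
noncomputable def cs (ℏ : ℝ) (z : ℂ) (x : ℝ) : ℂ :=
  (((Real.pi * ℏ) ^ (-(1 : ℝ) / 4) : ℝ) : ℂ) *
    Complex.exp (-(((x - z.re : ℝ) : ℂ)) ^ 2 / (2 * (ℏ : ℂ))) *
    Complex.exp (Complex.I * (z.im : ℂ) * (x : ℂ) / (ℏ : ℂ))

/-- Analytically continued coherent projector kernel `Φ_{a,b}(x,y)`. -/
noncomputable def Phi (ℏ : ℝ) (a b : ℂ) (x y : ℝ) : ℂ :=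
  (((Real.pi * ℏ) ^ (-(1 : ℝ) / 2) : ℝ) : ℂ) *
    Complex.exp (-((x ^ 2 + y ^ 2 : ℝ) : ℂ) / (2 * (ℏ : ℂ))) *
    Complex.exp ((a * (x : ℂ) + b * (y : ℂ)) / (ℏ : ℂ)) *
    Complex.exp (-(a + b) ^ 2 / (4 * (ℏ : ℂ)))

/-- Two-particle Töplitz kernel of the symbol `h`. -/
noncomputable def K2 (ℏ : ℝ) (h : ℂ × ℂ → ℂ) (x1 x2 y1 y2 : ℝ) : ℂ :=
  ((((2 * Real.pi * ℏ) ^ 2)⁻¹ : ℝ) : ℂ) * ∫ z : ℂ × ℂ,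
    h z * cs ℏ z.1 x1 * cs ℏ z.2 x2 *
      (starRingEnd ℂ) (cs ℏ z.1 y1) * (starRingEnd ℂ) (cs ℏ z.2 y2)

private lemma comb4 (c a1 b1 a2 b2 a3 b3 a4 b4 : ℂ) :
    (c * Complex.exp a1 * Complex.exp b1) * (c * Complex.exp a2 * Complex.exp b2) *
      (c * Complex.exp a3 * Complex.exp b3) * (c * Complex.exp a4 * Complex.exp b4) =
    c ^ 4 * Complex.exp (a1 + b1 + a2 + b2 + a3 + b3 + a4 + b4) := by
  simp [Complex.exp_add]; ring

private lemma comb2 (g c c1 c2 c3 d1 d2 d3 : ℂ) :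
    Complex.exp g * (c * Complex.exp c1 * Complex.exp c2 * Complex.exp c3) *
      (c * Complex.exp d1 * Complex.exp d2 * Complex.exp d3) =
    c ^ 2 * Complex.exp (g + c1 + c2 + c3 + d1 + d2 + d3) := by
  simp [Complex.exp_add]; ring

set_option maxHeartbeats 2000000 in
private lemma key (ℏ : ℝ) (hℏ : 0 < ℏ) (z1 z2 : ℂ) (x1 x2 y1 y2 : ℝ) :
    cs ℏ z1 x2 * cs ℏ z2 x1 * (starRingEnd ℂ) (cs ℏ z1 y1) * (starRingEnd ℂ) (cs ℏ z2 y2) =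
    Complex.exp (-((Complex.normSq (z1 - z2) : ℝ) : ℂ) / (2 * (ℏ : ℂ))) *
      Phi ℏ z2 ((starRingEnd ℂ) z1) x1 y1 * Phi ℏ z1 ((starRingEnd ℂ) z2) x2 y2 := by
  have hπℏ : (0:ℝ) < Real.pi * ℏ := mul_pos Real.pi_pos hℏ
  have hℏC : (ℏ:ℂ) ≠ 0 := by exact_mod_cast hℏ.ne'
  have hrs : (((Real.pi * ℏ) ^ (-(1:ℝ)/4) : ℝ) : ℂ) ^ 4
      = (((Real.pi * ℏ) ^ (-(1:ℝ)/2) : ℝ) : ℂ) ^ 2 := by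
    have : ((Real.pi * ℏ) ^ (-(1:ℝ)/4) : ℝ) ^ (4:ℕ)
        = ((Real.pi * ℏ) ^ (-(1:ℝ)/2) : ℝ) ^ (2:ℕ) := by
      rw [← Real.rpow_natCast _ 4, ← Real.rpow_natCast _ 2,
        ← Real.rpow_mul hπℏ.le, ← Real.rpow_mul hπℏ.le]
      norm_num
    exact_mod_cast congrArg (fun t : ℝ => (t : ℂ)) this
  obtain ⟨q1, p1⟩ := z1
  obtain ⟨q2, p2⟩ := z2
  simp only [cs, Phi, map_mul, ← Complex.exp_conj, map_div₀, map_neg, map_pow, map_add,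
    map_mul, Complex.conj_ofReal, Complex.conj_I, map_ofNat, Complex.mk_eq_add_mul_I]
  rw [show (↑q1 + ↑p1 * Complex.I - (↑q2 + ↑p2 * Complex.I)) =
      ((q1 - q2 : ℝ) : ℂ) + ((p1 - p2 : ℝ) : ℂ) * Complex.I by push_cast; ring,
    Complex.normSq_add_mul_I, comb4, comb2, hrs]
  congr 1
  push_cast
  simp only [div_eq_mul_inv, mul_inv]
  ring_nf
  simp only [Complex.I_sq]
  ring_nf

theorem toeplitz_exchange_V (ℏ : ℝ) (hℏ : 0 < ℏ)
    (h : ℂ × ℂ → ℂ) (hh : Integrable h volume)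
    (x1 x2 y1 y2 : ℝ) :
    K2 ℏ h x2 x1 y1 y2 =
      ((((2 * Real.pi * ℏ) ^ 2)⁻¹ : ℝ) : ℂ) * ∫ z : ℂ × ℂ,
        h z * Complex.exp (-((Complex.normSq (z.1 - z.2) : ℝ) : ℂ) / (2 * (ℏ : ℂ))) *
          Phi ℏ z.2 ((starRingEnd ℂ) z.1) x1 y1 *
          Phi ℏ z.1 ((starRingEnd ℂ) z.2) x2 y2 := by
  unfold K2
  congr 1
  refine integral_congr_ae (Filter.Eventually.of_forall fun z => ?_)
  have := key ℏ hℏ z.1 z.2 x1 x2 y1 y2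
  calc h z * cs ℏ z.1 x2 * cs ℏ z.2 x1 * (starRingEnd ℂ) (cs ℏ z.1 y1) *
        (starRingEnd ℂ) (cs ℏ z.2 y2)
      = h z * (cs ℏ z.1 x2 * cs ℏ z.2 x1 * (starRingEnd ℂ) (cs ℏ z.1 y1) *
        (starRingEnd ℂ) (cs ℏ z.2 y2)) := by ring
    _ = _ := by rw [this]; ring
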